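/- arXiv:2002.08739 — 4 statements merged into one kernel-verified Lean document; each statement's English description precedes it below -/
import Mathlib

section
/- Let G be a finite connected simple graph with n ≥ 4 vertices and let H = H(G) be the graph obtained from G by one step of the half-model. Then H is 2-connected; that is, H has at least 3 vertices and for every vertex w of H, the graph obtained from H by deleting w is connected. -/
open SimpleGraph

/-- The set of "clones": one new vertex for each subset of `V` of size `⌊|V|/2⌋`. -/
abbrev halfClones (V : Type) [Fintype V] [DecidableEq V] : Type :=
  {S : Finset V // S.card = Fintype.card V / 2}

/-- One step of the half-model: old vertices keep their adjacencies; the clone `v_S`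
is adjacent exactly to the members of `S`; clones form an independent set. -/
def halfStep {V : Type} [Fintype V] [DecidableEq V] (G : SimpleGraph V) :
    SimpleGraph (V ⊕ halfClones V) where
  Adj x y :=
    match x, y with
    | Sum.inl u, Sum.inl v => G.Adj u v
    | Sum.inl u, Sum.inr S => u ∈ S.1
    | Sum.inr S, Sum.inl u => u ∈ S.1
    | Sum.inr _, Sum.inr _ => False
  symm := by
    constructor
    rintro (u | S) (v | T) h
    · exact G.adj_symm h
    · exact h
    · exact h
    · exact h.elim
  loopless := by
    constructor
    rintro (u | S) h
    · exact G.irrefl h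
    · exact h.elim

instance halfStep.instDecidableRelAdj {V : Type} [Fintype V] [DecidableEq V]
    (G : SimpleGraph V) [DecidableRel G.Adj] : DecidableRel (halfStep G).Adj
  | Sum.inl u, Sum.inl v => inferInstanceAs (Decidable (G.Adj u v))
  | Sum.inl u, Sum.inr S => inferInstanceAs (Decidable (u ∈ S.1))
  | Sum.inr S, Sum.inl u => inferInstanceAs (Decidable (u ∈ S.1))
  | Sum.inr _, Sum.inr _ => inferInstanceAs (Decidable False)

/-!
Every clone has a neighbour among the old vertices, so it suffices to connect old vertices
in `H - w`. If `w` is a clone, the old vertices still span a copy of the connected graph `G`.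
If `w` is an old vertex, then since `⌊n/2⌋ ≥ 2` any two remaining old vertices lie in a
common clone, and every clone keeps a neighbour other than `w`.
-/

lemma SimpleGraph.Preconnected.of_reachable_core {W : Type*} {H : SimpleGraph W} (P : W → Prop)
    (hcore : ∀ x y, P x → P y → H.Reachable x y) (hreach : ∀ x, ∃ y, P y ∧ H.Reachable x y) :
    H.Preconnected := fun a b => by
  obtain ⟨x, hx, hax⟩ := hreach a
  obtain ⟨y, hy, hby⟩ := hreach b
  exact hax.trans ((hcore x y hx hy).trans hby.symm)

namespace halfStep

variable {V : Type} [Fintype V] [DecidableEq V] (G : SimpleGraph V)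

lemma exists_clone_superset {T : Finset V} (hT : T.card ≤ Fintype.card V / 2) :
    ∃ S : halfClones V, T ⊆ S.1 := by
  obtain ⟨S, hTS, hS⟩ := Finset.exists_superset_card_eq hT (Nat.div_le_self _ _)
  exact ⟨⟨S, hS⟩, hTS⟩

lemma reachable_induce_inr_inl {s : Set (V ⊕ halfClones V)} {S : halfClones V} {m : V}
    (hm : m ∈ S.1) (hS : .inr S ∈ s) (hm' : .inl m ∈ s) :
    ((halfStep G).induce s).Reachable ⟨.inr S, hS⟩ ⟨.inl m, hm'⟩ :=
  Adj.reachable (induce_adj.mpr hm)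

lemma preconnected_induce_compl_inl (hk : 2 ≤ Fintype.card V / 2) (u : V) :
    ((halfStep G).induce ({.inl u}ᶜ : Set (V ⊕ halfClones V))).Preconnected := by
  refine Preconnected.of_reachable_core (fun x => ∃ v, x.1 = .inl v) ?_ ?_
  · rintro ⟨_, hv⟩ ⟨_, hv'⟩ ⟨v, rfl⟩ ⟨v', rfl⟩
    have hcard : ({v, v'} : Finset V).card ≤ Fintype.card V / 2 :=
      (Finset.card_le_two).trans hk
    obtain ⟨S, hS⟩ := exists_clone_superset hcard
    have hSs : (.inr S : V ⊕ halfClones V) ∈ ({.inl u}ᶜ : Set _) := by simp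
    exact (reachable_induce_inr_inl G (hS (by simp)) hSs hv).symm.trans
      (reachable_induce_inr_inl G (hS (by simp)) hSs hv')
  · rintro ⟨v | S, hx⟩
    · exact ⟨_, ⟨v, rfl⟩, .rfl⟩
    · obtain ⟨m, hm, hmu⟩ := Finset.exists_mem_ne (by rw [S.2]; omega) u
      have hms : (.inl m : V ⊕ halfClones V) ∈ ({.inl u}ᶜ : Set _) := by simp [hmu]
      exact ⟨_, ⟨m, rfl⟩, reachable_induce_inr_inl G hm hx hms⟩

variable {G} in
lemma preconnected_induce_compl_inr (hG : G.Preconnected) (hk : 0 < Fintype.card V / 2)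
    (S₀ : halfClones V) :
    ((halfStep G).induce ({.inr S₀}ᶜ : Set (V ⊕ halfClones V))).Preconnected := by
  have hmem (v : V) : (.inl v : V ⊕ halfClones V) ∈ ({.inr S₀}ᶜ : Set _) := by simp
  let f : G →g (halfStep G).induce ({.inr S₀}ᶜ : Set _) :=
    { toFun v := ⟨.inl v, hmem v⟩
      map_rel' h := h }
  refine Preconnected.of_reachable_core (fun x => ∃ v, x = f v) ?_ ?_
  · rintro _ _ ⟨v, rfl⟩ ⟨v', rfl⟩
    exact (hG v v').map f
  · rintro ⟨v | S, hx⟩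
    · exact ⟨_, ⟨v, rfl⟩, .rfl⟩
    · obtain ⟨m, hm⟩ := Finset.card_pos.mp (S.2 ▸ hk)
      exact ⟨_, ⟨m, rfl⟩, reachable_induce_inr_inl G hm hx (hmem m)⟩

end halfStep

/-- if `G` is connected with at least `4` vertices, then `H = H(G)` is
2-connected: it has at least 3 vertices and deleting any single vertex leaves a
connected graph. -/
theorem stmt_6 {V : Type} [Fintype V] [DecidableEq V] (G : SimpleGraph V)
    (hn : 4 ≤ Fintype.card V) (hG : G.Connected) :
    3 ≤ Fintype.card (V ⊕ halfClones V) ∧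
      ∀ w : V ⊕ halfClones V,
        ((halfStep G).induce ({w}ᶜ : Set (V ⊕ halfClones V))).Connected := by
  have hk : 2 ≤ Fintype.card V / 2 := by omega
  have hcard : 3 ≤ Fintype.card (V ⊕ halfClones V) := by rw [Fintype.card_sum]; omega
  refine ⟨hcard, fun w => ?_⟩
  have : Nontrivial (V ⊕ halfClones V) := Fintype.one_lt_card_iff_nontrivial.mp (by omega)
  have : Nonempty ({w}ᶜ : Set (V ⊕ halfClones V)) := (Set.nonempty_compl_of_nontrivial w).to_subtype
  constructor
  cases w with
  | inl u => exact halfStep.preconnected_induce_compl_inl G hk u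
  | inr S => exact halfStep.preconnected_induce_compl_inr hG.preconnected (by omega) S
end

section
/- Let G_0 be any finite simple graph with at least one vertex, and let (G_t) be the iterated half-model sequence starting from G_0. Then for every t ≥ 4, the graph G_t is 2-connected; that is, G_t has at least 3 vertices and deleting any single vertex of G_t leaves a connected graph. -/
open SimpleGraph

/-- A finite simple graph, bundled with its vertex type and instances. -/
structure FinGraph where
  V : Type
  fin : Fintype V
  dec : DecidableEq V
  G : SimpleGraph V

/-- One step of the half-model on a bundled finite graph. -/
def FinGraph.step (X : FinGraph) : FinGraph :=
  letI := X.fin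
  letI := X.dec
  { V := X.V ⊕ halfClones X.V
    fin := inferInstance
    dec := inferInstance
    G := halfStep X.G }

/-- The number of vertices of a bundled finite graph. -/
def FinGraph.order (X : FinGraph) : ℕ :=
  letI := X.fin
  Fintype.card X.V

/-- 2-connectedness of a bundled finite graph: at least 3 vertices, and deleting any
single vertex leaves a connected graph. -/
def FinGraph.TwoConnected (X : FinGraph) : Prop :=
  letI := X.fin
  3 ≤ Fintype.card X.V ∧ ∀ w : X.V, (X.G.induce ({w}ᶜ : Set X.V)).Connected

/-!
Once `G` has `n ≥ 6` vertices, `H(G)` minus any vertex `w` is connected: two old vertices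
`u, v` lie in at least two common clones (as `⌊n/2⌋ ≥ 3`), so one of them survives the
deletion of `w` and joins `u` to `v`; and each clone has at least two old neighbours, one of
which differs from `w`. Since `C(n, ⌊n/2⌋) ≥ n`, each step at least doubles the number of
vertices, so `G_3` has at least `8` vertices and every `G_t` with `t ≥ 4` is 2-connected.
-/

namespace Finset

variable {α : Type*}

theorem exists_superset_card_eq_ne [Fintype α] [DecidableEq α] {s : Finset α} {k : ℕ}
    (hs : #s < k) (hk : k < Fintype.card α) (t : Finset α) :
    ∃ u, s ⊆ u ∧ #u = k ∧ u ≠ t := by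
  obtain ⟨u, hsu, -, hu⟩ :=
    exists_subsuperset_card_eq (subset_univ s) hs.le (by rw [card_univ]; exact hk.le)
  by_cases hut : u = t
  swap
  · exact ⟨u, hsu, hu, hut⟩
  subst hut
  -- Swap some `x ∈ u \ s` for some `y ∉ u`.
  obtain ⟨x, hxu, hxs⟩ := exists_mem_notMem_of_card_lt_card (hu ▸ hs)
  obtain ⟨y, -, hyu⟩ := exists_mem_notMem_of_card_lt_card (s := u) (t := univ)
    (by rw [card_univ, hu]; exact hk)
  have hy : y ∉ u.erase x := fun h => hyu (mem_of_mem_erase h)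
  refine ⟨insert y (u.erase x), ?_, ?_, ?_⟩
  · exact fun z hz => mem_insert_of_mem (mem_erase.2 ⟨fun h => hxs (h ▸ hz), hsu hz⟩)
  · rw [card_insert_of_notMem hy, card_erase_of_mem hxu, hu]
    omega
  · exact fun h => hyu (h ▸ mem_insert_self y _)

theorem exists_mem_inl_ne {β : Type*} {s : Finset α} (hs : 1 < #s) (w : α ⊕ β) :
    ∃ a ∈ s, Sum.inl a ≠ w := by
  rcases w with z | b
  · obtain ⟨a, ha, hne⟩ := s.exists_mem_ne hs z
    exact ⟨a, ha, fun h => hne (Sum.inl_injective h)⟩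
  · obtain ⟨a, ha⟩ := card_pos.1 (zero_lt_one.trans hs)
    exact ⟨a, ha, Sum.inl_ne_inr⟩

end Finset

section HalfStep

variable {V : Type} [Fintype V] [DecidableEq V]

theorem exists_halfClone_ne (hV : 6 ≤ Fintype.card V) (u v : V) (w : V ⊕ halfClones V) :
    ∃ S : halfClones V, u ∈ S.1 ∧ v ∈ S.1 ∧ Sum.inr S ≠ w := by
  obtain ⟨S, huvS, hS, hne⟩ := Finset.exists_superset_card_eq_ne (k := Fintype.card V / 2)
    ((Finset.card_le_two (a := u) (b := v)).trans_lt (by omega)) (by omega)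
    -- the clone `w` if it is one, any finset otherwise
    (Sum.elim (fun _ => ∅) Subtype.val w)
  refine ⟨⟨S, hS⟩, huvS (by simp), huvS (by simp), ?_⟩
  rintro rfl
  exact hne rfl

theorem halfStep_induce_compl_singleton_connected (G : SimpleGraph V)
    (hV : 6 ≤ Fintype.card V) (w : V ⊕ halfClones V) :
    ((halfStep G).induce ({w}ᶜ : Set (V ⊕ halfClones V))).Connected := by
  set H := (halfStep G).induce ({w}ᶜ : Set (V ⊕ halfClones V))
  have old_reachable (u v : V) (hu : Sum.inl u ≠ w) (hv : Sum.inl v ≠ w) :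
      H.Reachable ⟨Sum.inl u, hu⟩ ⟨Sum.inl v, hv⟩ := by
    obtain ⟨S, huS, hvS, hSw⟩ := exists_halfClone_ne hV u v w
    have hu_S : H.Adj ⟨Sum.inl u, hu⟩ ⟨Sum.inr S, hSw⟩ := huS
    have hS_v : H.Adj ⟨Sum.inr S, hSw⟩ ⟨Sum.inl v, hv⟩ := hvS
    exact hu_S.reachable.trans hS_v.reachable
  obtain ⟨u₀, -, hu₀⟩ := Finset.exists_mem_inl_ne (s := Finset.univ)
    (by rw [Finset.card_univ]; omega) w
  refine (connected_iff_exists_forall_reachable H).2 ⟨⟨Sum.inl u₀, hu₀⟩, ?_⟩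
  rintro ⟨u | S, hw⟩
  · exact old_reachable u₀ u hu₀ hw
  · obtain ⟨u, huS, hu⟩ := Finset.exists_mem_inl_ne (s := S.1) (by rw [S.2]; omega) w
    have hu_S : H.Adj ⟨Sum.inl u, hu⟩ ⟨Sum.inr S, hw⟩ := huS
    exact (old_reachable u₀ u hu₀ hu).trans hu_S.reachable

end HalfStep

namespace FinGraph

theorem order_step (X : FinGraph) :
    X.step.order = X.order + X.order.choose (X.order / 2) := by
  let := X.fin
  let := X.dec
  show Fintype.card (X.V ⊕ halfClones X.V) = _
  rw [Fintype.card_sum, Fintype.card_finset_len]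
  rfl

theorem two_mul_order_le_order_step (X : FinGraph) : 2 * X.order ≤ X.step.order := by
  have : X.order ≤ X.order.choose (X.order / 2) := by
    simpa using Nat.choose_le_middle 1 X.order
  rw [order_step]
  omega

theorem two_pow_mul_order_le_order_iterate (X : FinGraph) (k : ℕ) :
    2 ^ k * X.order ≤ (step^[k] X).order := by
  induction k with
  | zero => simp
  | succ k ih =>
    rw [Function.iterate_succ_apply', pow_succ', mul_assoc]
    exact (Nat.mul_le_mul_left 2 ih).trans (two_mul_order_le_order_step _)

theorem twoConnected_step (X : FinGraph) (hX : 6 ≤ X.order) : X.step.TwoConnected := by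
  let := X.fin
  let := X.dec
  have hV : 6 ≤ Fintype.card X.V := hX
  refine ⟨?_, halfStep_induce_compl_singleton_connected X.G hV⟩
  show 3 ≤ Fintype.card (X.V ⊕ halfClones X.V)
  rw [Fintype.card_sum]
  omega

end FinGraph

/-- starting from any finite graph with at least one vertex, the iterated
half-model graph `G_t` is 2-connected for every `t ≥ 4`. -/
theorem stmt_7 (X : FinGraph) (h : 1 ≤ X.order) :
    ∀ t : ℕ, 4 ≤ t → (FinGraph.step^[t] X).TwoConnected := by
  intro t ht
  obtain ⟨s, rfl⟩ : ∃ s, t = s + 1 := ⟨t - 1, by omega⟩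
  rw [Function.iterate_succ_apply']
  apply FinGraph.twoConnected_step
  calc 6 ≤ 2 ^ 3 * 1 := by norm_num
    _ ≤ 2 ^ s * X.order := Nat.mul_le_mul (Nat.pow_le_pow_right two_pos (by omega)) h
    _ ≤ _ := X.two_pow_mul_order_le_order_iterate s
end

section
/- Let G be a finite 2-connected simple graph with n ≥ 4 vertices and let H = H(G) be the graph obtained from G by one step of the half-model. Then the diameter of H is at most 3; that is, any two vertices of H are joined by a path of length at most 3. -/
/-!
Any two old vertices lie in a common clone, so they are at distance at most 2, and an old
vertex `u` reaches a clone `S` through a clone containing `u` and some member of `S`. Two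
clones `S`, `T` sharing a vertex are at distance 2. If they are disjoint, `S ∪ T` misses at
most one vertex `z` (and if it misses none we take `z ∈ T`); since `G - z` is connected, some
edge of `G - z` leaves `S`, and its other end lies in `T`, giving a path `S, x, y, T`.
-/

open SimpleGraph

section Separation

variable {V : Type} {G : SimpleGraph V}

theorem exists_adj_mem_notMem_of_connected_induce_compl {z a b : V}
    (hz : (G.induce ({z}ᶜ : Set V)).Connected) {S : Set V} (ha : a ≠ z) (hb : b ≠ z)
    (haS : a ∈ S) (hbS : b ∉ S) : ∃ x y, x ∈ S ∧ y ∉ S ∧ y ≠ z ∧ G.Adj x y := by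
  obtain ⟨p⟩ := hz.preconnected ⟨a, ha⟩ ⟨b, hb⟩
  obtain ⟨d, -, hd₁, hd₂⟩ := p.exists_boundary_dart {v | v.1 ∈ S} haS hbS
  exact ⟨d.fst, d.snd, hd₁, hd₂, d.snd.2, d.adj⟩

variable [Fintype V] [DecidableEq V]

theorem Finset.exists_forall_notMem_ne_mem_of_disjoint {S T : Finset V} (hST : Disjoint S T)
    (hT : 2 ≤ T.card) (hcover : Fintype.card V ≤ S.card + T.card + 1) :
    ∃ z a, z ∉ S ∧ a ∈ T ∧ a ≠ z ∧ ∀ v ∉ S, v ≠ z → v ∈ T := by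
  have hmissed : ((S ∪ T)ᶜ).card ≤ 1 := by
    rw [Finset.card_compl, Finset.card_union_of_disjoint hST]
    omega
  by_cases hc : ∃ c, c ∉ S ∧ c ∉ T
  · obtain ⟨c, hcS, hcT⟩ := hc
    obtain ⟨a, ha⟩ := Finset.card_pos.1 (by omega : 0 < T.card)
    refine ⟨c, a, hcS, ha, fun hac => hcT (hac ▸ ha), fun v hvS hvc => ?_⟩
    by_contra hvT
    exact hvc (Finset.card_le_one.1 hmissed v (by simp [hvS, hvT]) c (by simp [hcS, hcT]))
  · push Not at hc
    obtain ⟨a, ha, z, hz, haz⟩ := Finset.one_lt_card.1 (by omega : 1 < T.card)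
    exact ⟨z, a, Finset.disjoint_right.1 hST hz, ha, haz, fun v hvS _ => hc v hvS⟩

theorem exists_adj_of_forall_connected_induce_compl
    (hG : ∀ w : V, (G.induce ({w}ᶜ : Set V)).Connected) {S T : Finset V} (hST : Disjoint S T)
    (hS : S.Nonempty) (hT : 2 ≤ T.card) (hcover : Fintype.card V ≤ S.card + T.card + 1) :
    ∃ x ∈ S, ∃ y ∈ T, G.Adj x y := by
  obtain ⟨z, a, hzS, haT, haz, hzT⟩ :=
    Finset.exists_forall_notMem_ne_mem_of_disjoint hST hT hcover
  obtain ⟨b, hbS⟩ := hS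
  obtain ⟨x, y, hxS, hyS, hyz, hxy⟩ :=
    exists_adj_mem_notMem_of_connected_induce_compl (S := (S : Set V)) (hG z)
      (fun hbz => hzS (hbz ▸ hbS)) haz hbS (Finset.disjoint_right.1 hST haT)
  exact ⟨x, hxS, y, hzT y hyS hyz, hxy⟩

end Separation

section HalfStep

variable {V : Type} [Fintype V] [DecidableEq V] {G : SimpleGraph V}

@[simp]
theorem halfStep_adj_inl_inl {u v : V} : (halfStep G).Adj (.inl u) (.inl v) ↔ G.Adj u v :=
  Iff.rfl

@[simp]
theorem halfStep_adj_inl_inr {u : V} {S : halfClones V} :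
    (halfStep G).Adj (.inl u) (.inr S) ↔ u ∈ S.1 :=
  Iff.rfl

@[simp]
theorem halfStep_adj_inr_inl {u : V} {S : halfClones V} :
    (halfStep G).Adj (.inr S) (.inl u) ↔ u ∈ S.1 :=
  Iff.rfl

theorem halfClones.nonempty (hn : 2 ≤ Fintype.card V) (S : halfClones V) : S.1.Nonempty := by
  rw [← Finset.card_pos, S.2]
  omega

theorem halfClones.exists_mem_mem (hn : 4 ≤ Fintype.card V) (u v : V) :
    ∃ S : halfClones V, u ∈ S.1 ∧ v ∈ S.1 := by
  obtain ⟨S, huv, hS⟩ := Finset.exists_superset_card_eq (s := {u, v}) (n := Fintype.card V / 2)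
    ((Finset.card_le_two).trans (by omega)) (Nat.div_le_self _ _)
  exact ⟨⟨S, hS⟩, huv (by simp), huv (by simp)⟩

theorem halfStep_exists_walk_inl_inl (hn : 4 ≤ Fintype.card V) (u v : V) :
    ∃ p : (halfStep G).Walk (.inl u) (.inl v), p.length ≤ 3 := by
  obtain ⟨S, hu, hv⟩ := halfClones.exists_mem_mem hn u v
  exact ⟨.cons (halfStep_adj_inl_inr.2 hu) (.cons (halfStep_adj_inr_inl.2 hv) .nil), by simp⟩

theorem halfStep_exists_walk_inl_inr (hn : 4 ≤ Fintype.card V) (u : V) (S : halfClones V) :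
    ∃ p : (halfStep G).Walk (.inl u) (.inr S), p.length ≤ 3 := by
  obtain ⟨w, hw⟩ := halfClones.nonempty (by omega) S
  obtain ⟨T, hu, hwT⟩ := halfClones.exists_mem_mem hn u w
  exact ⟨.cons (halfStep_adj_inl_inr.2 hu) (.cons (halfStep_adj_inr_inl.2 hwT)
    (.cons (halfStep_adj_inl_inr.2 hw) .nil)), by simp⟩

theorem halfStep_exists_walk_inr_inr (hn : 4 ≤ Fintype.card V)
    (hG : ∀ w : V, (G.induce ({w}ᶜ : Set V)).Connected) (S T : halfClones V) :
    ∃ p : (halfStep G).Walk (.inr S) (.inr T), p.length ≤ 3 := by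
  by_cases hST : Disjoint S.1 T.1
  · obtain ⟨x, hx, y, hy, hxy⟩ := exists_adj_of_forall_connected_induce_compl hG hST
      (halfClones.nonempty (by omega) S) (by omega) (by omega)
    exact ⟨.cons (halfStep_adj_inr_inl.2 hx) (.cons (halfStep_adj_inl_inl.2 hxy)
      (.cons (halfStep_adj_inl_inr.2 hy) .nil)), by simp⟩
  · obtain ⟨w, hwS, hwT⟩ := Finset.not_disjoint_iff.1 hST
    exact ⟨.cons (halfStep_adj_inr_inl.2 hwS) (.cons (halfStep_adj_inl_inr.2 hwT) .nil), by simp⟩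

theorem halfStep_exists_walk (hn : 4 ≤ Fintype.card V)
    (hG : ∀ w : V, (G.induce ({w}ᶜ : Set V)).Connected) (x y : V ⊕ halfClones V) :
    ∃ p : (halfStep G).Walk x y, p.length ≤ 3 := by
  rcases x with u | S <;> rcases y with v | T
  · exact halfStep_exists_walk_inl_inl hn u v
  · exact halfStep_exists_walk_inl_inr hn u T
  · obtain ⟨p, hp⟩ := halfStep_exists_walk_inl_inr (G := G) hn v S
    exact ⟨p.reverse, by simpa using hp⟩
  · exact halfStep_exists_walk_inr_inr hn hG S T

end HalfStep

/-- if `G` is 2-connected with at least `4` vertices, then any two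
vertices of `H = H(G)` are joined by a path of length at most `3`: `H` has diameter
at most `3`. -/
theorem stmt_8 {V : Type} [Fintype V] [DecidableEq V] (G : SimpleGraph V)
    (hn : 4 ≤ Fintype.card V)
    (h2c : 3 ≤ Fintype.card V ∧ ∀ w : V, (G.induce ({w}ᶜ : Set V)).Connected) :
    ∀ x y : V ⊕ halfClones V,
      ∃ p : (halfStep G).Walk x y, p.IsPath ∧ p.length ≤ 3 := by
  intro x y
  obtain ⟨p, hp⟩ := halfStep_exists_walk hn h2c.2 x y
  exact ⟨p.bypass, p.bypass_isPath, p.length_bypass_le_length.trans hp⟩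
end

section
/- Let G_0 be a finite simple graph with at least 4 vertices, and let (G_t) be the iterated half-model sequence starting from G_0. Then for every t ≥ 5, the diameter of G_t is at most 3. -/
open SimpleGraph

/-!
Once a graph has `m ≥ 4` vertices, its half-model `H` has `N = m + C(m, ⌊m/2⌋) ≥ 2m + 2`
vertices, so two disjoint `⌊N/2⌋`-sets `S, T` of `H` leave at most one vertex uncovered and
each contains more than `m` vertices, hence a clone. If there were no edge between `S` and `T`,
a clone in `S` has its two or more neighbours outside `T`, so `S` (and likewise `T`) contains
an old vertex; then every clone meeting old vertices of both `S` and `T` is uncovered, and with a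
third old vertex one finds two uncovered vertices. So any two disjoint half-sets of `H` are
joined by an edge, and in `H(H)` two clones whose sets are disjoint are joined through such an
edge by a path of length `3`; every other pair is joined within `3` steps through a common clone
or a common member.
-/

open Finset

lemma Nat.add_two_le_choose_half {m : ℕ} (hm : 4 ≤ m) : m + 2 ≤ m.choose (m / 2) := by
  have h2 : m.choose 2 = m * (m - 1) / 2 := Nat.choose_two_right m
  obtain ⟨n, rfl⟩ : ∃ n, m = n + 4 := ⟨m - 4, by omega⟩
  have hsq : (n + 4) * (n + 4 - 1) = n * n + 7 * n + 12 := by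
    rw [show n + 4 - 1 = n + 3 by omega]; ring
  have := Nat.choose_le_middle 2 (n + 4)
  omega

lemma Finset.exists_inr_mem_of_card_lt {α β : Type} [Fintype α] {A : Finset (α ⊕ β)}
    (h : Fintype.card α < #A) : ∃ b, Sum.inr b ∈ A := by
  have hleft : #A.toLeft ≤ Fintype.card α := card_le_univ _
  obtain ⟨b, hb⟩ : A.toRight.Nonempty := by
    rw [← card_pos]; have := A.card_toLeft_add_card_toRight; omega
  exact ⟨b, mem_toRight.mp hb⟩

lemma Finset.eq_of_notMem_union_of_card_eq_half {α : Type} [Fintype α] [DecidableEq α]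
    {S T : Finset α} (hS : #S = Fintype.card α / 2) (hT : #T = Fintype.card α / 2)
    (hST : Disjoint S T) {x y : α} (hx : x ∉ S ∪ T) (hy : y ∉ S ∪ T) : x = y := by
  have hcompl : #(S ∪ T)ᶜ ≤ 1 := by
    rw [card_compl, card_union_of_disjoint hST]; omega
  exact card_le_one.mp hcompl x (mem_compl.mpr hx) y (mem_compl.mpr hy)

section HalfModel

variable {V : Type} [Fintype V] [DecidableEq V]

lemma exists_halfClone_superset {s : Finset V} (hs : #s ≤ Fintype.card V / 2) :
    ∃ Z : halfClones V, s ⊆ Z.1 := by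
  obtain ⟨t, hst, ht⟩ := exists_superset_card_eq hs (Nat.div_le_self _ _)
  exact ⟨⟨t, ht⟩, hst⟩

lemma exists_halfClone_superset_notMem {s : Finset V} {a : V} (ha : a ∉ s)
    (hs : #s ≤ Fintype.card V / 2) : ∃ Z : halfClones V, s ⊆ Z.1 ∧ a ∉ Z.1 := by
  have hsub : s ⊆ univ.erase a := fun x hx =>
    mem_erase.mpr ⟨ne_of_mem_of_not_mem hx ha, mem_univ x⟩
  have hle : Fintype.card V / 2 ≤ #(univ.erase a) := by
    rw [card_erase_of_mem (mem_univ a), card_univ]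
    have : 0 < Fintype.card V := Fintype.card_pos_iff.mpr ⟨a⟩
    omega
  obtain ⟨t, hst, hta, ht⟩ := exists_subsuperset_card_eq hsub hs hle
  exact ⟨⟨t, ht⟩, hst, fun h => (mem_erase.mp (hta h)).1 rfl⟩

def HasHalfCrossing {W : Type} [Fintype W] (G : SimpleGraph W) : Prop :=
  ∀ S T : Finset W, #S = Fintype.card W / 2 → #T = Fintype.card W / 2 →
    Disjoint S T → ∃ x ∈ S, ∃ y ∈ T, G.Adj x y

variable {G : SimpleGraph V} {S T : Finset (V ⊕ halfClones V)}

lemma exists_inl_mem_of_forall_not_adj (hm : 4 ≤ Fintype.card V) (hS : Fintype.card V < #S)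
    (hno : ∀ x ∈ S, ∀ y ∈ T, ¬ (halfStep G).Adj x y)
    (hout : ∀ x y, x ∉ S ∪ T → y ∉ S ∪ T → x = y) : ∃ u, Sum.inl u ∈ S := by
  obtain ⟨c, hc⟩ := exists_inr_mem_of_card_lt hS
  obtain ⟨w₁, hw₁, w₂, hw₂, hne⟩ := one_lt_card.mp (show 1 < #c.1 by rw [c.2]; omega)
  by_contra! hnone
  have hout_of_mem (w) (hw : w ∈ c.1) : Sum.inl w ∉ S ∪ T := by
    rw [mem_union, not_or]
    exact ⟨hnone w, fun hwT => hno _ hc _ hwT hw⟩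
  exact hne (Sum.inl_injective (hout _ _ (hout_of_mem w₁ hw₁) (hout_of_mem w₂ hw₂)))

lemma inr_notMem_union_of_forall_not_adj
    (hno : ∀ x ∈ S, ∀ y ∈ T, ¬ (halfStep G).Adj x y) {Z : halfClones V} {u v : V}
    (hu : Sum.inl u ∈ S) (hv : Sum.inl v ∈ T) (huZ : u ∈ Z.1) (hvZ : v ∈ Z.1) :
    Sum.inr Z ∉ S ∪ T := by
  rw [mem_union, not_or]
  exact ⟨fun hZ => hno _ hZ _ hv hvZ, fun hZ => hno _ hu _ hZ huZ⟩

lemma halfStep_hasHalfCrossing (G : SimpleGraph V) (hm : 4 ≤ Fintype.card V) :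
    HasHalfCrossing (halfStep G) := by
  intro S T hS hT hST
  by_contra! hno
  have hout : ∀ x y, x ∉ S ∪ T → y ∉ S ∪ T → x = y := fun x y hx hy =>
    eq_of_notMem_union_of_card_eq_half hS hT hST hx hy
  have hbig : Fintype.card V < Fintype.card (V ⊕ halfClones V) / 2 := by
    have := Nat.add_two_le_choose_half hm
    rw [Fintype.card_sum, Fintype.card_finset_len]
    omega
  obtain ⟨u, hu⟩ := exists_inl_mem_of_forall_not_adj hm (hS ▸ hbig) hno hout
  obtain ⟨v, hv⟩ := exists_inl_mem_of_forall_not_adj (T := S) hm (hT ▸ hbig)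
    (fun x hx y hy hxy => hno y hy x hx hxy.symm) (by simpa only [union_comm] using hout)
  have huv : u ≠ v := by rintro rfl; exact disjoint_left.mp hST hu hv
  have hk : 2 ≤ Fintype.card V / 2 := by omega
  obtain ⟨w, hw⟩ : ({u, v} : Finset V)ᶜ.Nonempty := by
    rw [← card_pos, card_compl, card_pair huv]; omega
  -- `Z ⊇ {u, v}` avoids `w` and is uncovered; `w`, or a clone through `w`, is a second one
  obtain ⟨Z, hZ, hwZ⟩ :=
    exists_halfClone_superset_notMem (mem_compl.mp hw) (card_le_two.trans hk)
  have hZout := inr_notMem_union_of_forall_not_adj hno hu hv (hZ (by simp)) (hZ (by simp))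
  rcases em (Sum.inl w ∈ S ∪ T) with hwST | hwST
  · obtain ⟨Z', hwZ', hZ'out⟩ :
        ∃ Z' : halfClones V, w ∈ Z'.1 ∧ Sum.inr Z' ∉ S ∪ T := by
      rcases mem_union.mp hwST with hwS | hwT
      · obtain ⟨Z', hZ'⟩ := exists_halfClone_superset (card_le_two.trans hk : #{w, v} ≤ _)
        exact ⟨Z', hZ' (by simp),
          inr_notMem_union_of_forall_not_adj hno hwS hv (hZ' (by simp)) (hZ' (by simp))⟩
      · obtain ⟨Z', hZ'⟩ := exists_halfClone_superset (card_le_two.trans hk : #{w, u} ≤ _)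
        exact ⟨Z', hZ' (by simp),
          inr_notMem_union_of_forall_not_adj hno hu hwT (hZ' (by simp)) (hZ' (by simp))⟩
    exact hwZ (Sum.inr_injective (hout _ _ hZ'out hZout) ▸ hwZ')
  · exact Sum.inl_ne_inr (hout _ _ hwST hZout)

lemma halfStep_exists_walk_inl_inr_length_le_three (G : SimpleGraph V)
    (hk : 2 ≤ Fintype.card V / 2) (u : V) (T : halfClones V) :
    ∃ p : (halfStep G).Walk (.inl u) (.inr T), p.length ≤ 3 := by
  obtain ⟨v, hv⟩ : T.1.Nonempty := card_pos.mp (by rw [T.2]; omega)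
  obtain ⟨Z, hZ⟩ := exists_halfClone_superset (card_le_two.trans hk : #{u, v} ≤ _)
  exact ⟨.cons (show (halfStep G).Adj (.inl u) (.inr Z) from hZ (by simp))
    (.cons (show (halfStep G).Adj (.inr Z) (.inl v) from hZ (by simp))
    (.cons (show (halfStep G).Adj (.inl v) (.inr T) from hv) .nil)), by simp⟩

lemma halfStep_exists_walk_length_le_three (hm : 4 ≤ Fintype.card V)
    (hG : HasHalfCrossing G) :
    ∀ x y, ∃ p : (halfStep G).Walk x y, p.length ≤ 3 := by
  have hk : 2 ≤ Fintype.card V / 2 := by omega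
  rintro (u | S) (v | T)
  · obtain ⟨Z, hZ⟩ := exists_halfClone_superset (card_le_two.trans hk : #{u, v} ≤ _)
    exact ⟨.cons (show (halfStep G).Adj (.inl u) (.inr Z) from hZ (by simp))
      (.cons (show (halfStep G).Adj (.inr Z) (.inl v) from hZ (by simp)) .nil), by simp⟩
  · exact halfStep_exists_walk_inl_inr_length_le_three G hk u T
  · obtain ⟨p, hp⟩ := halfStep_exists_walk_inl_inr_length_le_three G hk v S
    exact ⟨p.reverse, by simpa using hp⟩
  · by_cases hST : Disjoint S.1 T.1
    · obtain ⟨x, hx, y, hy, hxy⟩ := hG S.1 T.1 S.2 T.2 hST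
      exact ⟨.cons (show (halfStep G).Adj (.inr S) (.inl x) from hx)
        (.cons (show (halfStep G).Adj (.inl x) (.inl y) from hxy)
        (.cons (show (halfStep G).Adj (.inl y) (.inr T) from hy) .nil)), by simp⟩
    · obtain ⟨w, hwS, hwT⟩ := not_disjoint_iff.mp hST
      exact ⟨.cons (show (halfStep G).Adj (.inr S) (.inl w) from hwS)
        (.cons (show (halfStep G).Adj (.inl w) (.inr T) from hwT) .nil), by simp⟩

end HalfModel

lemma FinGraph.order_le_step (X : FinGraph) : X.order ≤ X.step.order := by
  let := X.fin
  let := X.dec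
  show Fintype.card X.V ≤ Fintype.card (X.V ⊕ halfClones X.V)
  rw [Fintype.card_sum]
  omega

lemma FinGraph.order_le_iterate_step (X : FinGraph) (t : ℕ) :
    X.order ≤ (FinGraph.step^[t] X).order := by
  induction t with
  | zero => rfl
  | succ t ih => exact ih.trans (Function.iterate_succ_apply' .. ▸ order_le_step _)

lemma FinGraph.exists_isPath_length_le_three_step_step (X : FinGraph) (h : 4 ≤ X.order)
    (x y : X.step.step.V) : ∃ p : X.step.step.G.Walk x y, p.IsPath ∧ p.length ≤ 3 := by
  let := X.fin
  let := X.dec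
  have h' : 4 ≤ Fintype.card (X.V ⊕ halfClones X.V) := h.trans X.order_le_step
  obtain ⟨p, hp⟩ := halfStep_exists_walk_length_le_three h' (halfStep_hasHalfCrossing X.G h) x y
  exact ⟨p.bypass, p.bypass_isPath, p.length_bypass_le_length.trans hp⟩

/-- starting from any finite graph with at least `4` vertices, for every
`t ≥ 5` the iterated half-model graph `G_t` has diameter at most `3`: any two of its
vertices are joined by a path of length at most `3`. -/
theorem stmt_9 (X : FinGraph) (h : 4 ≤ X.order) :
    ∀ t : ℕ, 5 ≤ t → ∀ x y : (FinGraph.step^[t] X).V,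
      ∃ p : (FinGraph.step^[t] X).G.Walk x y, p.IsPath ∧ p.length ≤ 3 := by
  intro t ht
  obtain ⟨s, rfl⟩ : ∃ s, t = s + 2 := ⟨t - 2, by omega⟩
  rw [Function.iterate_succ_apply', Function.iterate_succ_apply']
  exact FinGraph.exists_isPath_length_le_three_step_step _ (h.trans (X.order_le_iterate_step s))
end
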